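/- arXiv:2404.09333 — 2 statements merged into one kernel-verified Lean document; each statement's English description precedes it below -/
import Mathlib

section
/- Let $(S_k)_{k\ge 0}$ and $(\tilde S_k)_{k\ge 0}$ be two independent simple symmetric random walks on $\mathbb{Z}$ with initial values $S_0, \tilde S_0 \in \{-1, 1\}$ each equal to $\pm 1$ with probability $1/2$ independently (i.e., $(S_0,\tilde S_0)$ has distribution $\mu$ uniform on $\{-1,1\}^2$). Let $Q_n = \#\{(j,k) \in [1,n]^2 : S_j = \tilde S_k\}$. Then there is a constant $C > 0$ such that $P_\mu\{Q_n = 0\} \le C/n$ for all $n \ge 1$. -/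
/-!
If the two walks never meet at times in `[1, n]`, then, being nearest-neighbour, the one that is
lower at time 1 stays below the other's time-1 position, and the other stays above the first's.
Time-1 positions lie in `[-2, 2]` and starting points in `[-1, 1]`, so the increments of one walk
keep their partial sums below `3` and those of the other keep them above `-3`. By independence the
probability is at most twice the square of `P(max_{j ≤ n} ∑_{i<j} ε_i < 3)`. The reflection
principle bounds the number of `±1` paths of length `n` with maximum below `a` by the number of
paths ending in `[-a, a)`, hence by `2a·C(n, ⌊n/2⌋) ≤ 2a·2^n/√n`, giving the bound `72/n`.
-/

open MeasureTheory ProbabilityTheory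

/-- `ε` is an i.i.d. sequence of symmetric `±1` steps. -/
def IsSRWIncrements {Ω : Type*} [MeasureSpace Ω] (ε : ℕ → Ω → ℤ) : Prop :=
  (∀ i, Measurable (ε i)) ∧
  iIndepFun ε ℙ ∧
  (∀ i, ℙ {ω | ε i ω = 1} = 1/2 ∧ ℙ {ω | ε i ω = -1} = 1/2)

open Finset
open scoped ENNReal Pointwise

lemma forall_lt_of_forall_ne {s : ℕ → ℤ} {c : ℤ} {m n : ℕ}
    (hstep : ∀ t, s (t + 1) ≤ s t + 1) (hm : s m < c)
    (hne : ∀ j, m ≤ j → j ≤ n → s j ≠ c) : ∀ j, m ≤ j → j ≤ n → s j < c := by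
  intro j hmj hjn
  induction j, hmj using Nat.le_induction with
  | base => exact hm
  | succ j hmj ih =>
    have := ih (by omega)
    have := hstep j
    have := hne (j + 1) (by omega) hjn
    omega

/-- A `±1` path of length `n` is encoded by its set of up-steps `s ⊆ range n`. -/
def walk (s : Finset ℕ) (j : ℕ) : ℤ := ∑ i ∈ range j, if i ∈ s then 1 else -1

lemma walk_zero (s : Finset ℕ) : walk s 0 = 0 := rfl

lemma walk_succ (s : Finset ℕ) (j : ℕ) :
    walk s (j + 1) = walk s j + if j ∈ s then 1 else -1 :=
  sum_range_succ _ _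

lemma walk_succ_le (s : Finset ℕ) (j : ℕ) : walk s (j + 1) ≤ walk s j + 1 := by
  rw [walk_succ]; split <;> omega

lemma walk_congr {s t : Finset ℕ} {j : ℕ} (h : ∀ i < j, i ∈ s ↔ i ∈ t) :
    walk s j = walk t j :=
  sum_congr rfl fun i hi => if_congr (h i (mem_range.mp hi)) rfl rfl

lemma walk_range_sdiff {n j : ℕ} (s : Finset ℕ) (hj : j ≤ n) :
    walk (range n \ s) j = -walk s j := by
  rw [walk, walk, ← sum_neg_distrib]
  refine sum_congr rfl fun i hi => ?_
  have : i < n := (mem_range.mp hi).trans_le hj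
  by_cases his : i ∈ s <;> simp [his, this]

lemma walk_of_subset_range {n : ℕ} {s : Finset ℕ} (hs : s ⊆ range n) :
    walk s n = 2 * #s - n := by
  have : ∀ i ∈ range n, (if i ∈ s then 1 else -1 : ℤ) = 2 * (if i ∈ s then 1 else 0) - 1 :=
    fun i _ => by split <;> norm_num
  rw [walk, sum_congr rfl this, sum_sub_distrib, ← mul_sum, sum_boole,
    filter_mem_eq_inter, inter_eq_right.mpr hs]
  simp

lemma walk_filter_eq_sum {e : ℕ → ℤ} (he : ∀ i, e i = 1 ∨ e i = -1) {n j : ℕ} (hj : j ≤ n) :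
    walk {i ∈ range n | e i = 1} j = ∑ i ∈ range j, e i := by
  refine sum_congr rfl fun i hi => ?_
  have : i < n := (mem_range.mp hi).trans_le hj
  rcases he i with h | h <;> simp [h, this]

lemma exists_walk_eq {n : ℕ} {a : ℤ} {s : Finset ℕ} (ha : 0 ≤ a) (h : a ≤ walk s n) :
    ∃ j ≤ n, walk s j = a := by
  by_contra! hne
  have h0 : walk s 0 < a := lt_of_le_of_ne (walk_zero s ▸ ha) (hne 0 n.zero_le)
  have := forall_lt_of_forall_ne (walk_succ_le s) h0 (fun j _ hj => hne j hj) n n.zero_le le_rfl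
  omega

/-- The first time `j ≤ n` at which the walk of `s` is at level `a`, and `n` if there is none. -/
def hitTime (n : ℕ) (a : ℤ) (s : Finset ℕ) : ℕ :=
  Nat.find (p := fun j => walk s j = a ∨ j = n) ⟨n, .inr rfl⟩

lemma hitTime_le (n : ℕ) (a : ℤ) (s : Finset ℕ) : hitTime n a s ≤ n :=
  Nat.find_min' _ (.inr rfl)

lemma walk_hitTime {n : ℕ} {a : ℤ} {s : Finset ℕ} (h : ∃ j ≤ n, walk s j = a) :
    walk s (hitTime n a s) = a := by
  obtain ⟨j, hjn, hj⟩ := h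
  have hle : hitTime n a s ≤ j := Nat.find_min' _ (.inl hj)
  rcases Nat.find_spec (p := fun j => walk s j = a ∨ j = n) ⟨n, .inr rfl⟩ with h | h
  · exact h
  · rw [hitTime, h] at hle ⊢
    rwa [le_antisymm hjn hle] at hj

def reflect (n : ℕ) (a : ℤ) (s : Finset ℕ) : Finset ℕ := symmDiff s (Ico (hitTime n a s) n)

lemma walk_reflect_of_le {n j : ℕ} {a : ℤ} {s : Finset ℕ} (hj : j ≤ hitTime n a s) :
    walk (reflect n a s) j = walk s j :=
  walk_congr fun i hi => by
    simp [reflect, mem_symmDiff, show ¬hitTime n a s ≤ i by omega]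

lemma walk_reflect_of_ge {n j : ℕ} {a : ℤ} {s : Finset ℕ} (ha : walk s (hitTime n a s) = a)
    (hj : hitTime n a s ≤ j) (hjn : j ≤ n) :
    walk (reflect n a s) j = 2 * a - walk s j := by
  induction j, hj using Nat.le_induction with
  | base => rw [walk_reflect_of_le le_rfl, ha]; ring
  | succ j hj ih =>
    rw [walk_succ, walk_succ, ih (by omega)]
    have : j ∈ reflect n a s ↔ j ∉ s := by
      simp [reflect, mem_symmDiff, hj, show j < n by omega]
    by_cases hjs : j ∈ s <;> simp only [hjs, this, if_true, if_false, not_true_eq_false,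
      not_false_eq_true] <;> ring

lemma hitTime_reflect (n : ℕ) (a : ℤ) (s : Finset ℕ) :
    hitTime n a (reflect n a s) = hitTime n a s := by
  rw [hitTime, Nat.find_eq_iff]
  have hspec := Nat.find_spec (p := fun j => walk s j = a ∨ j = n) ⟨n, .inr rfl⟩
  refine ⟨by rw [walk_reflect_of_le le_rfl]; exact hspec, fun j hj => ?_⟩
  rw [walk_reflect_of_le hj.le]
  exact Nat.find_min _ hj

lemma reflect_involutive (n : ℕ) (a : ℤ) : Function.Involutive (reflect n a) := fun s => by
  rw [reflect, hitTime_reflect, reflect, symmDiff_symmDiff_cancel_right]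

lemma card_filter_walk_eq_le (n : ℕ) (k : ℤ) :
    #{s ∈ (range n).powerset | walk s n = k} ≤ n.choose (n / 2) := by
  calc #{s ∈ (range n).powerset | walk s n = k}
      ≤ #(powersetCard (((n : ℤ) + k).toNat / 2) (range n)) := by
        refine card_le_card fun s hs => ?_
        rw [mem_filter, mem_powerset] at hs
        have := walk_of_subset_range hs.1
        exact mem_powersetCard.mpr ⟨hs.1, by omega⟩
    _ ≤ n.choose (n / 2) := by
        rw [card_powersetCard, card_range]
        exact Nat.choose_le_middle _ _


lemma reflect_subset_range {n : ℕ} {a : ℤ} {s : Finset ℕ} (hs : s ⊆ range n) :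
    reflect n a s ⊆ range n :=
  symmDiff_le_sup.trans (union_subset hs fun i hi => by simp at hi ⊢; omega)

/-- The reflection principle: reflecting `range n \ s` at its first visit to `a` is an injection
from the walks ending below `-a` into the walks that reach `a` and end below `a`. -/
lemma card_forall_walk_lt_add_card_walk_lt_neg_le (n a : ℕ) :
    #{s ∈ (range n).powerset | ∀ j ≤ n, walk s j < a} + #{s ∈ (range n).powerset | walk s n < -a}
      ≤ #{s ∈ (range n).powerset | walk s n < a} := by
  set f := fun s => reflect n a (range n \ s)
  have hinj : Set.InjOn f {s | s ⊆ range n} := fun s hs t ht hst => by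
    have := (reflect_involutive n a).injective hst
    rw [← Finset.sdiff_sdiff_eq_self hs, this, Finset.sdiff_sdiff_eq_self ht]
  have hmaps : ∀ s ∈ (range n).powerset, walk s n < -a →
      f s ⊆ range n ∧ walk (f s) n < a ∧ ¬∀ j ≤ n, walk (f s) j < a := by
    intro s hs hlt
    rw [mem_powerset] at hs
    have hc : a ≤ walk (range n \ s) n := by rw [walk_range_sdiff s le_rfl]; omega
    have hhit := walk_hitTime (exists_walk_eq (Int.natCast_nonneg a) hc)
    refine ⟨reflect_subset_range sdiff_subset, ?_, fun h => ?_⟩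
    · rw [walk_reflect_of_ge hhit (hitTime_le _ _ _) le_rfl, walk_range_sdiff s le_rfl]
      omega
    · have := h _ (hitTime_le n a (range n \ s))
      rw [walk_reflect_of_le le_rfl, hhit] at this
      exact this.false
  calc #{s ∈ (range n).powerset | ∀ j ≤ n, walk s j < a}
        + #{s ∈ (range n).powerset | walk s n < -a}
      = #({s ∈ (range n).powerset | ∀ j ≤ n, walk s j < a}
          ∪ image f {s ∈ (range n).powerset | walk s n < -a}) := by
        rw [card_union_of_disjoint, card_image_of_injOn]
        · exact hinj.mono fun s hs => mem_powerset.mp (mem_filter.mp hs).1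
        · refine disjoint_left.mpr fun t ht ht' => ?_
          obtain ⟨s, hs, rfl⟩ := mem_image.mp ht'
          rw [mem_filter] at hs ht
          exact (hmaps s hs.1 hs.2).2.2 ht.2
    _ ≤ #{s ∈ (range n).powerset | walk s n < a} := by
        refine card_le_card (union_subset (fun s hs => ?_) fun t ht => ?_)
        · rw [mem_filter] at hs ⊢
          exact ⟨hs.1, hs.2 n le_rfl⟩
        · obtain ⟨s, hs, rfl⟩ := mem_image.mp ht
          rw [mem_filter] at hs ⊢
          have := hmaps s hs.1 hs.2
          exact ⟨mem_powerset.mpr this.1, this.2.1⟩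

lemma card_filter_forall_walk_lt_le (n a : ℕ) :
    #{s ∈ (range n).powerset | ∀ j ≤ n, walk s j < a} ≤ 2 * a * n.choose (n / 2) := by
  have hsplit : #{s ∈ (range n).powerset | walk s n < a}
      ≤ #{s ∈ (range n).powerset | walk s n < -a} + 2 * a * n.choose (n / 2) :=
    calc #{s ∈ (range n).powerset | walk s n < a}
        ≤ #({s ∈ (range n).powerset | walk s n < -a}
            ∪ (Ico (-a : ℤ) a).biUnion fun k => {s ∈ (range n).powerset | walk s n = k}) := by
          refine card_le_card fun s hs => ?_
          rw [mem_filter] at hs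
          by_cases h : walk s n < -a
          · exact mem_union_left _ (mem_filter.mpr ⟨hs.1, h⟩)
          · exact mem_union_right _ (mem_biUnion.mpr
              ⟨walk s n, mem_Ico.mpr ⟨by omega, hs.2⟩, mem_filter.mpr ⟨hs.1, rfl⟩⟩)
      _ ≤ #{s ∈ (range n).powerset | walk s n < -a}
            + ∑ k ∈ Ico (-a : ℤ) a, #{s ∈ (range n).powerset | walk s n = k} :=
          (card_union_le _ _).trans (Nat.add_le_add_left card_biUnion_le _)
      _ ≤ #{s ∈ (range n).powerset | walk s n < -a} + 2 * a * n.choose (n / 2) := by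
          grw [sum_le_sum fun k _ => card_filter_walk_eq_le n k, sum_const, Int.card_Ico]
          simp only [sub_neg_eq_add, smul_eq_mul]
          rw [← Nat.cast_add, Int.toNat_natCast, two_mul]
  have := card_forall_walk_lt_add_card_walk_lt_neg_le n a
  omega

lemma two_mul_add_one_mul_centralBinom_sq_le (m : ℕ) :
    (2 * m + 1) * m.centralBinom ^ 2 ≤ 16 ^ m := by
  induction m with
  | zero => simp
  | succ m ih =>
    refine Nat.le_of_mul_le_mul_left ?_ (by positivity : 0 < (m + 1) ^ 2)
    calc (m + 1) ^ 2 * ((2 * (m + 1) + 1) * (m + 1).centralBinom ^ 2)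
        = (2 * m + 3) * ((m + 1) * (m + 1).centralBinom) ^ 2 := by ring
      _ = 4 * (2 * m + 1) * (2 * m + 3) * ((2 * m + 1) * m.centralBinom ^ 2) := by
          rw [Nat.succ_mul_centralBinom_succ]; ring
      _ ≤ 16 * (m + 1) ^ 2 * 16 ^ m := Nat.mul_le_mul (by nlinarith) ih
      _ = (m + 1) ^ 2 * 16 ^ (m + 1) := by ring

lemma mul_choose_half_sq_le (n : ℕ) : n * n.choose (n / 2) ^ 2 ≤ 4 ^ n := by
  have h := two_mul_add_one_mul_centralBinom_sq_le
  obtain ⟨m, rfl | rfl⟩ := Nat.even_or_odd' n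
  · rw [Nat.mul_div_cancel_left m two_pos, ← Nat.centralBinom_eq_two_mul_choose,
      show 4 ^ (2 * m) = 16 ^ m by rw [pow_mul]; norm_num]
    exact (Nat.mul_le_mul_right _ (by omega)).trans (h m)
  · have hc : (m + 1) * (2 * m + 1).choose m = (2 * m + 1) * m.centralBinom := by
      rw [← Nat.choose_symm_half, Nat.centralBinom_eq_two_mul_choose, mul_comm,
        Nat.add_one_mul_choose_eq]
    have hc2 : (2 * m + 1).choose m ≤ 2 * m.centralBinom := by nlinarith
    rw [show (2 * m + 1) / 2 = m by omega, show 4 ^ (2 * m + 1) = 4 * 16 ^ m by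
      rw [pow_succ, pow_mul]; norm_num; ring]
    calc (2 * m + 1) * (2 * m + 1).choose m ^ 2 ≤ (2 * m + 1) * (2 * m.centralBinom) ^ 2 := by
          gcongr
      _ = 4 * ((2 * m + 1) * m.centralBinom ^ 2) := by ring
      _ ≤ 4 * 16 ^ m := Nat.mul_le_mul_left _ (h m)

lemma choose_half_mul_sqrt_le (n : ℕ) : (n.choose (n / 2) : ℝ) * √n ≤ 2 ^ n := by
  have h : (n : ℝ) * n.choose (n / 2) ^ 2 ≤ 4 ^ n := by exact_mod_cast mul_choose_half_sq_le n
  rw [← Real.sqrt_sq (by positivity : (0 : ℝ) ≤ 2 ^ n), ← Real.sqrt_sq (by positivity :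
    (0 : ℝ) ≤ n.choose (n / 2)), ← Real.sqrt_mul (by positivity)]
  refine Real.sqrt_le_sqrt ?_
  rw [← pow_mul, pow_mul']
  norm_num
  linarith

section Probability

variable {Ω : Type*} [MeasureSpace Ω]

lemma ae_eq_one_or_eq_neg_one [IsProbabilityMeasure (ℙ : Measure Ω)] {f : Ω → ℤ}
    (hf : Measurable f) (h : ℙ {ω | f ω = 1} = 1 / 2 ∧ ℙ {ω | f ω = -1} = 1 / 2) :
    ∀ᵐ ω, f ω = 1 ∨ f ω = -1 := by
  have hdisj : Disjoint {ω | f ω = 1} {ω | f ω = -1} :=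
    Set.disjoint_left.mpr fun ω h1 h2 => by simp_all
  refine (ae_iff_measure_eq (by measurability)).mpr ?_
  rw [Set.ofPred_or, measure_union hdisj (hf (measurableSet_singleton _)), h.1, h.2,
    ENNReal.add_halves, measure_univ]

def stayBelow (n : ℕ) (a : ℤ) : Set (ℕ → ℤ) := {e | ∀ j ≤ n, ∑ i ∈ range j, e i < a}

lemma measurableSet_stayBelow (n : ℕ) (a : ℤ) : MeasurableSet (stayBelow n a) := by
  simp only [stayBelow, Set.ofPred_forall]
  measurability

namespace IsSRWIncrements

variable {ε : ℕ → Ω → ℤ}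

lemma ae_forall_eq_one_or_eq_neg_one [IsProbabilityMeasure (ℙ : Measure Ω)]
    (hε : IsSRWIncrements ε) : ∀ᵐ ω, ∀ i, ε i ω = 1 ∨ ε i ω = -1 :=
  ae_all_iff.mpr fun i => ae_eq_one_or_eq_neg_one (hε.1 i) (hε.2.2 i)

lemma neg (hε : IsSRWIncrements ε) : IsSRWIncrements (-ε) := by
  refine ⟨fun i => (hε.1 i).neg, hε.2.1.comp (fun _ => Neg.neg) fun _ => measurable_neg,
    fun i => ?_⟩
  simp only [Pi.neg_apply, neg_eq_iff_eq_neg]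
  exact (hε.2.2 i).symm

lemma measure_forall_eq_sign (hε : IsSRWIncrements ε) (n : ℕ) (s : Finset ℕ) :
    ℙ {ω | ∀ i < n, ε i ω = if i ∈ s then 1 else -1} = 2⁻¹ ^ n := by
  have hset : {ω | ∀ i < n, ε i ω = if i ∈ s then 1 else -1}
      = ⋂ i ∈ range n, ε i ⁻¹' {if i ∈ s then 1 else -1} := by
    ext ω; simp
  rw [hset, hε.2.1.measure_inter_preimage_eq_mul _ fun _ _ => measurableSet_singleton _,
    prod_congr rfl (g := fun _ => 2⁻¹) fun i _ => ?_, prod_const, card_range]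
  split
  · exact (one_div (2 : ℝ≥0∞)) ▸ (hε.2.2 i).1
  · exact (one_div (2 : ℝ≥0∞)) ▸ (hε.2.2 i).2

lemma measure_stayBelow_le [IsProbabilityMeasure (ℙ : Measure Ω)] (hε : IsSRWIncrements ε)
    {n : ℕ} (hn : 1 ≤ n) (a : ℕ) :
    ℙ (Function.swap ε ⁻¹' stayBelow n a) ≤ ENNReal.ofReal (2 * a / √n) := by
  set W := {s ∈ (range n).powerset | ∀ j ≤ n, walk s j < a}
  have hsub : Function.swap ε ⁻¹' stayBelow n a
      ≤ᵐ[ℙ] ⋃ s ∈ W, {ω | ∀ i < n, ε i ω = if i ∈ s then 1 else -1} := by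
    filter_upwards [hε.ae_forall_eq_one_or_eq_neg_one] with ω hω hstay
    refine Set.mem_biUnion (x := {i ∈ range n | ε i ω = 1}) ?_ fun i hi => ?_
    · refine mem_filter.mpr ⟨mem_powerset.mpr (filter_subset _ _), fun j hj => ?_⟩
      rw [walk_filter_eq_sum hω hj]
      exact hstay j hj
    · rcases hω i with h | h <;> simp [h, hi]
  have hW : (#W : ℝ) * √n ≤ 2 * a * 2 ^ n := by
    have hc := choose_half_mul_sqrt_le n
    have hw : (#W : ℝ) ≤ 2 * a * n.choose (n / 2) := by
      exact_mod_cast card_filter_forall_walk_lt_le n a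
    nlinarith [Real.sqrt_nonneg n]
  calc ℙ (Function.swap ε ⁻¹' stayBelow n a)
      ≤ ∑ s ∈ W, ℙ {ω | ∀ i < n, ε i ω = if i ∈ s then 1 else -1} :=
        (measure_mono_ae hsub).trans (measure_biUnion_finset_le _ _)
    _ = ENNReal.ofReal (#W / 2 ^ n) := by
        simp only [hε.measure_forall_eq_sign, sum_const, nsmul_eq_mul]
        rw [ENNReal.ofReal_div_of_pos (by positivity), ENNReal.ofReal_natCast,
          ENNReal.ofReal_pow zero_le_two, ENNReal.ofReal_ofNat, div_eq_mul_inv, ENNReal.inv_pow]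
    _ ≤ ENNReal.ofReal (2 * a / √n) := by
        refine ENNReal.ofReal_le_ofReal ?_
        rwa [div_le_div_iff₀ (by positivity) (by positivity)]

end IsSRWIncrements

lemma measure_stayBelow_inter_neg_stayBelow_le [IsProbabilityMeasure (ℙ : Measure Ω)]
    {ε ε' : ℕ → Ω → ℤ} (hε : IsSRWIncrements ε) (hε' : IsSRWIncrements ε')
    (hind : IndepFun (Function.swap ε) (Function.swap ε') ℙ) {n : ℕ} (hn : 1 ≤ n) (a : ℕ) :
    ℙ (Function.swap ε ⁻¹' stayBelow n a ∩ Function.swap ε' ⁻¹' (-stayBelow n a))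
      ≤ ENNReal.ofReal ((2 * a) ^ 2 / n) := by
  rw [hind.measure_inter_preimage_eq_mul _ _ (measurableSet_stayBelow n a)
    (measurableSet_stayBelow n a).neg]
  calc ℙ (Function.swap ε ⁻¹' stayBelow n a) * ℙ (Function.swap (-ε') ⁻¹' stayBelow n a)
      ≤ ENNReal.ofReal (2 * a / √n) * ENNReal.ofReal (2 * a / √n) :=
        mul_le_mul' (hε.measure_stayBelow_le hn a) (hε'.neg.measure_stayBelow_le hn a)
    _ = ENNReal.ofReal ((2 * a) ^ 2 / n) := by
        rw [← ENNReal.ofReal_mul (by positivity), div_mul_div_comm,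
          Real.mul_self_sqrt n.cast_nonneg, sq]

end Probability

section Intersections

lemma add_sum_lt_of_forall_ne {y c : ℤ} {f : ℕ → ℤ} {n : ℕ} (hf : ∀ i, |f i| ≤ 1)
    (h1 : y + f 0 < c) (hne : ∀ j, 1 ≤ j → j ≤ n → y + ∑ i ∈ range j, f i ≠ c) :
    ∀ j, 1 ≤ j → j ≤ n → y + ∑ i ∈ range j, f i < c :=
  forall_lt_of_forall_ne (fun t => by rw [sum_range_succ]; linarith [(abs_le.mp (hf t)).2])
    (by simpa using h1) hne

variable {x x' : ℤ} {e e' : ℕ → ℤ} {n : ℕ}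

lemma mem_stayBelow_of_lt (hx : |x| ≤ 1) (hx' : |x'| ≤ 1) (he : ∀ i, |e i| ≤ 1)
    (he' : ∀ i, |e' i| ≤ 1) (hlt : x + e 0 < x' + e' 0)
    (hne : ∀ j k, 1 ≤ j → j ≤ n → 1 ≤ k → k ≤ n →
      x + ∑ i ∈ range j, e i ≠ x' + ∑ i ∈ range k, e' i) :
    e ∈ stayBelow n 3 ∧ -e' ∈ stayBelow n 3 := by
  have hbelow := add_sum_lt_of_forall_ne he hlt fun j hj hjn => by
    simpa using hne j 1 hj hjn le_rfl (hj.trans hjn)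
  have habove := add_sum_lt_of_forall_ne (y := -x') (f := -e') (c := -(x + e 0))
    (fun i => by simpa using he' i) (by simp only [Pi.neg_apply]; omega) fun k hk hkn h =>
      hne 1 k le_rfl (hk.trans hkn) hk hkn (by
        simp only [Pi.neg_apply, sum_neg_distrib, sum_range_one] at h ⊢; omega)
  have := abs_le.mp hx; have := abs_le.mp hx'; have := abs_le.mp (he 0); have := abs_le.mp (he' 0)
  refine ⟨fun j hj => ?_, fun k hk => ?_⟩
  · rcases j.eq_zero_or_pos with rfl | hj0
    · simp
    · have := hbelow j hj0 hj; omega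
  · rcases k.eq_zero_or_pos with rfl | hk0
    · simp
    · have := habove k hk0 hk
      simp only [Pi.neg_apply, sum_neg_distrib] at this ⊢
      omega

lemma mem_stayBelow_of_forall_ne (hx : |x| ≤ 1) (hx' : |x'| ≤ 1) (he : ∀ i, |e i| ≤ 1)
    (he' : ∀ i, |e' i| ≤ 1) (hn : 1 ≤ n)
    (hne : ∀ j k, 1 ≤ j → j ≤ n → 1 ≤ k → k ≤ n →
      x + ∑ i ∈ range j, e i ≠ x' + ∑ i ∈ range k, e' i) :
    e ∈ stayBelow n 3 ∧ -e' ∈ stayBelow n 3 ∨ e' ∈ stayBelow n 3 ∧ -e ∈ stayBelow n 3 := by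
  have h11 := hne 1 1 le_rfl hn le_rfl hn
  simp only [sum_range_one] at h11
  rcases h11.lt_or_gt with hlt | hgt
  · exact .inl (mem_stayBelow_of_lt hx hx' he he' hlt hne)
  · exact .inr (mem_stayBelow_of_lt hx' hx he' he hgt
      fun j k hj hjn hk hkn => (hne k j hk hkn hj hjn).symm)

end Intersections

theorem srw_no_intersection_bound_general {Ω : Type*} [MeasureSpace Ω]
    [IsProbabilityMeasure (ℙ : Measure Ω)]
    (x x' : Ω → ℤ) (ε ε' : ℕ → Ω → ℤ) (S S' : ℕ → Ω → ℤ)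
    (hx : Measurable x) (hx' : Measurable x')
    (hxd : ℙ {ω | x ω = 1} = 1/2 ∧ ℙ {ω | x ω = -1} = 1/2)
    (hx'd : ℙ {ω | x' ω = 1} = 1/2 ∧ ℙ {ω | x' ω = -1} = 1/2)
    (hε : IsSRWIncrements ε) (hε' : IsSRWIncrements ε')
    -- the two walks (starting points together with increments) are independent
    (hindep : IndepFun (fun ω => (x ω, fun i => ε i ω))
      (fun ω => (x' ω, fun i => ε' i ω)) ℙ)
    (hS : ∀ n ω, S n ω = x ω + ∑ i ∈ Finset.range n, ε i ω)
    (hS' : ∀ n ω, S' n ω = x' ω + ∑ i ∈ Finset.range n, ε' i ω) :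
    ∃ C > (0 : ℝ), ∀ n : ℕ, 1 ≤ n →
      ℙ {ω | ∀ j k, 1 ≤ j → j ≤ n → 1 ≤ k → k ≤ n → S j ω ≠ S' k ω}
        ≤ ENNReal.ofReal (C / n) := by
  refine ⟨72, by norm_num, fun n hn => ?_⟩
  have habs : ∀ z : ℤ, z = 1 ∨ z = -1 → |z| ≤ 1 := by rintro z (rfl | rfl) <;> norm_num
  set B := stayBelow n 3
  have hsub : {ω | ∀ j k, 1 ≤ j → j ≤ n → 1 ≤ k → k ≤ n → S j ω ≠ S' k ω}
      ≤ᵐ[ℙ] ((Function.swap ε ⁻¹' B ∩ Function.swap ε' ⁻¹' (-B))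
        ∪ (Function.swap ε' ⁻¹' B ∩ Function.swap ε ⁻¹' (-B)) : Set Ω) := by
    filter_upwards [ae_eq_one_or_eq_neg_one hx hxd, ae_eq_one_or_eq_neg_one hx' hx'd,
      hε.ae_forall_eq_one_or_eq_neg_one, hε'.ae_forall_eq_one_or_eq_neg_one]
      with ω h1 h2 h3 h4 hω
    simp only [hS, hS'] at hω
    exact mem_stayBelow_of_forall_ne (habs _ h1) (habs _ h2) (fun i => habs _ (h3 i))
      (fun i => habs _ (h4 i)) hn hω
  have hind : IndepFun (Function.swap ε) (Function.swap ε') ℙ :=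
    hindep.comp measurable_snd measurable_snd
  calc ℙ {ω | ∀ j k, 1 ≤ j → j ≤ n → 1 ≤ k → k ≤ n → S j ω ≠ S' k ω}
      ≤ ℙ (Function.swap ε ⁻¹' B ∩ Function.swap ε' ⁻¹' (-B))
        + ℙ (Function.swap ε' ⁻¹' B ∩ Function.swap ε ⁻¹' (-B)) :=
        (measure_mono_ae hsub).trans (measure_union_le _ _)
    _ ≤ ENNReal.ofReal ((2 * 3) ^ 2 / n) + ENNReal.ofReal ((2 * 3) ^ 2 / n) :=
        add_le_add (measure_stayBelow_inter_neg_stayBelow_le hε hε' hind hn 3)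
          (measure_stayBelow_inter_neg_stayBelow_le hε' hε hind.symm hn 3)
    _ = ENNReal.ofReal (72 / n) := by
        rw [← ENNReal.ofReal_add (by positivity) (by positivity)]
        ring_nf

/-- Two independent simple symmetric random walks `S, S'` with independent
starting points uniform on `{-1,1}` (so the pair of starting points has the
law `μ` uniform on `{-1,1}²`).  If `Qₙ = #{(j,k) ∈ [1,n]² : S j = S' k}` counts
the mutual intersections, then `P_μ{Qₙ = 0} ≤ C/n` for some constant `C > 0`. -/
theorem srw_no_intersection_bound {Ω : Type*} [MeasureSpace Ω]
    [IsProbabilityMeasure (ℙ : Measure Ω)]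
    (x x' : Ω → ℤ) (ε ε' : ℕ → Ω → ℤ) (S S' : ℕ → Ω → ℤ)
    (hx : Measurable x) (hx' : Measurable x')
    (hxd : ℙ {ω | x ω = 1} = 1/2 ∧ ℙ {ω | x ω = -1} = 1/2)
    (hx'd : ℙ {ω | x' ω = 1} = 1/2 ∧ ℙ {ω | x' ω = -1} = 1/2)
    (hε : IsSRWIncrements ε) (hε' : IsSRWIncrements ε')
    -- the starting point of each walk is independent of its increments
    (hstart : iIndepFun
      (fun i : ℕ => if i = 0 then x else ε (i - 1)) ℙ)
    (hstart' : iIndepFun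
      (fun i : ℕ => if i = 0 then x' else ε' (i - 1)) ℙ)
    -- the two walks (starting points together with increments) are independent
    (hindep : IndepFun (fun ω => (x ω, fun i => ε i ω))
      (fun ω => (x' ω, fun i => ε' i ω)) ℙ)
    (hS : ∀ n ω, S n ω = x ω + ∑ i ∈ Finset.range n, ε i ω)
    (hS' : ∀ n ω, S' n ω = x' ω + ∑ i ∈ Finset.range n, ε' i ω) :
    ∃ C > (0 : ℝ), ∀ n : ℕ, 1 ≤ n →
      ℙ {ω | ∀ j k, 1 ≤ j → j ≤ n → 1 ≤ k → k ≤ n → S j ω ≠ S' k ω}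
        ≤ ENNReal.ofReal (C / n) :=
  srw_no_intersection_bound_general x x' ε ε' S S' hx hx' hxd hx'd hε hε' hindep hS hS'
end

section
/- Let $(a_n)_{n\ge 1}$ be a nonincreasing sequence of nonnegative reals. Suppose there exists $C > 0$ such that for all $\theta \in (0,1)$, $\sum_{n=1}^{\infty} \theta^n a_n \le C\big(1 + \log\frac{1}{1-\theta}\big)$. Then $a_n = O\big(\frac{\log n}{n}\big)$ as $n \to \infty$; more precisely there is $C' > 0$ with $a_n \le C' \frac{\log n}{n}$ for all $n \ge 2$. -/
/-!
For `θ = 1 - 1/n`, monotonicity gives `n θⁿ aₙ ≤ ∑_{k ≤ n} θᵏ aₖ ≤ C (1 + log n)`, and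
`θⁿ = (1 - 1/n)ⁿ` stays above the absolute constant `1/(2e)`; hence `n aₙ = O(1 + log n) = O(log n)`.
-/

open Real

theorem nat_mul_pow_mul_le_tsum {a : ℕ → ℝ} (ha : ∀ n, 0 ≤ a n) (hmono : Antitone a)
    {θ : ℝ} (hθ₀ : 0 ≤ θ) (hθ₁ : θ < 1) (n : ℕ) :
    n * (θ ^ n * a n) ≤ ∑' k, θ ^ (k + 1) * a (k + 1) := by
  have hterm_nonneg : ∀ k, 0 ≤ θ ^ (k + 1) * a (k + 1) := fun k => by
    have := ha (k + 1); positivity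
  have hsummable : Summable fun k => θ ^ (k + 1) * a (k + 1) :=
    .of_nonneg_of_le hterm_nonneg
      (fun k => mul_le_mul (pow_le_pow_of_le_one hθ₀ hθ₁.le k.le_succ)
        (hmono (Nat.zero_le _)) (ha _) (pow_nonneg hθ₀ k))
      ((summable_geometric_of_lt_one hθ₀ hθ₁).mul_right (a 0))
  calc (n : ℝ) * (θ ^ n * a n) = ∑ _k ∈ Finset.range n, θ ^ n * a n := by simp
    _ ≤ ∑ k ∈ Finset.range n, θ ^ (k + 1) * a (k + 1) := by
        refine Finset.sum_le_sum fun k hk => ?_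
        have hkn : k + 1 ≤ n := Finset.mem_range.mp hk
        exact mul_le_mul (pow_le_pow_of_le_one hθ₀ hθ₁.le hkn) (hmono hkn) (ha n)
          (pow_nonneg hθ₀ _)
    _ ≤ ∑' k, θ ^ (k + 1) * a (k + 1) :=
        hsummable.sum_le_tsum _ fun k _ => hterm_nonneg k

/-- `(1 - 1/(m+1))^(m+1) = (1 + 1/m)⁻ᵐ (1 + 1/m)⁻¹` with `(1 + 1/m)ᵐ ≤ e` and `1 + 1/m ≤ 2`. -/
theorem inv_two_mul_exp_one_le_one_sub_inv_pow {n : ℕ} (hn : 2 ≤ n) :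
    (2 * exp 1)⁻¹ ≤ (1 - (n : ℝ)⁻¹) ^ n := by
  obtain ⟨m, rfl⟩ : ∃ m, n = m + 1 := ⟨n - 1, by omega⟩
  have hm : (1 : ℝ) ≤ m := by exact_mod_cast (show 1 ≤ m by omega)
  have hθ : 1 - ((m + 1 : ℕ) : ℝ)⁻¹ = (1 + (m : ℝ)⁻¹)⁻¹ := by
    push_cast; field_simp; ring
  have hbase_le_two : 1 + (m : ℝ)⁻¹ ≤ 2 := by
    have := inv_le_one_of_one_le₀ hm; linarith
  calc (2 * exp 1)⁻¹ = (exp 1)⁻¹ * 2⁻¹ := by rw [mul_comm, mul_inv]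
    _ ≤ ((1 + (m : ℝ)⁻¹) ^ m)⁻¹ * (1 + (m : ℝ)⁻¹)⁻¹ := by
        gcongr; exact one_add_inv_pow_le_exp
    _ = (1 - ((m + 1 : ℕ) : ℝ)⁻¹) ^ (m + 1) := by rw [hθ, pow_succ, inv_pow]

theorem one_add_log_le_mul_log {x : ℝ} (hx : 2 ≤ x) :
    1 + log x ≤ (1 + (log 2)⁻¹) * log x := by
  have hlog2 : 0 < log 2 := log_pos one_lt_two
  have hlog_ge : log 2 ≤ log x := log_le_log two_pos hx
  have : 1 ≤ (log 2)⁻¹ * log x := by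
    rw [inv_mul_eq_div, one_le_div hlog2]; exact hlog_ge
  linarith

/-- Tauberian-type bound: if `(aₙ)` is nonincreasing and nonnegative and its
generating function satisfies `∑_{n≥1} θⁿ aₙ ≤ C (1 + log (1/(1-θ)))` for all
`θ ∈ (0,1)`, then `aₙ ≤ C' (log n)/n` for all `n ≥ 2`, for some `C' > 0`. -/
theorem tauberian_log_bound (a : ℕ → ℝ) (ha : ∀ n, 0 ≤ a n) (hmono : Antitone a)
    (C : ℝ) (hC : 0 < C)
    (hgen : ∀ θ : ℝ, θ ∈ Set.Ioo (0 : ℝ) 1 →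
      ∑' n : ℕ, θ ^ (n + 1) * a (n + 1) ≤ C * (1 + Real.log (1 / (1 - θ)))) :
    ∃ C' > (0 : ℝ), ∀ n : ℕ, 2 ≤ n → a n ≤ C' * Real.log n / n := by
  refine ⟨2 * exp 1 * C * (1 + (log 2)⁻¹), by positivity, fun n hn => ?_⟩
  have hn2 : (2 : ℝ) ≤ n := by exact_mod_cast hn
  have hn_pos : (0 : ℝ) < n := by linarith
  set θ : ℝ := 1 - (n : ℝ)⁻¹
  have hθ : θ ∈ Set.Ioo (0 : ℝ) 1 := by
    have : (n : ℝ)⁻¹ ≤ 2⁻¹ := inv_anti₀ two_pos hn2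
    constructor <;> simp only [θ] <;> linarith [inv_pos.mpr hn_pos]
  have hgen_n : ∑' k : ℕ, θ ^ (k + 1) * a (k + 1) ≤ C * (1 + log n) := by
    simpa [θ] using hgen θ hθ
  have hθ_pow := inv_two_mul_exp_one_le_one_sub_inv_pow hn
  have htauber := (nat_mul_pow_mul_le_tsum ha hmono hθ.1.le hθ.2 n).trans hgen_n
  have han := ha n
  rw [le_div_iff₀ hn_pos]
  calc a n * n = 2 * exp 1 * ((2 * exp 1)⁻¹ * (n * a n)) := by field_simp
    _ ≤ 2 * exp 1 * (θ ^ n * (n * a n)) := by gcongr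
    _ = 2 * exp 1 * (n * (θ ^ n * a n)) := by ring
    _ ≤ 2 * exp 1 * (C * ((1 + (log 2)⁻¹) * log n)) := by
        grw [htauber, one_add_log_le_mul_log hn2]
    _ = _ := by ring
end
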